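/- Let G be a group and C ≤ G a nontrivial proper subgroup such that the conjugates of C partition G∖{1} together with {1}; that is, every nonidentity element of G lies in exactly one conjugate of C. Then for any two distinct elements x, y ∈ G there is a unique subset of G of the form g·C^h (a left coset of a conjugate of C) containing both x and y. -/

import Mathlib

/-- Conjugate subgroup `C^h`. -/
def conjSub {G : Type*} [Group G] (C : Subgroup G) (h : G) : Subgroup G :=
  C.map (MulAut.conj h).toMonoidHom

/-- A left coset `g • C^h` of a conjugate of `C`, as a set ("line"). -/
def lineOf {G : Type*} [Group G] (C : Subgroup G) (g h : G) : Set G :=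
  (fun z => g * z) '' (conjSub C h : Set G)

/-! A line through `x` is `x • C^h`, so a line through `x` and `y` is fixed by a conjugate
`C^h` containing `x⁻¹ * y`; the partition hypothesis says there is exactly one. -/

open scoped Pointwise

section Lines

variable {G : Type*} [Group G] (C : Subgroup G)

theorem lineOf_eq_smul (g h : G) : lineOf C g h = g • (conjSub C h : Set G) := rfl

variable {C}

theorem mem_lineOf {g h z : G} : z ∈ lineOf C g h ↔ g⁻¹ * z ∈ conjSub C h :=
  mem_leftCoset_iff g

theorem self_mem_lineOf (x h : G) : x ∈ lineOf C x h :=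
  mem_lineOf.2 <| by rw [inv_mul_cancel]; exact one_mem _

theorem lineOf_eq_of_mem {g h x : G} (hx : x ∈ lineOf C g h) : lineOf C g h = lineOf C x h := by
  rw [lineOf_eq_smul, lineOf_eq_smul, leftCoset_eq_iff]
  exact mem_lineOf.1 hx

theorem inv_mul_mem_conjSub_of_mem_lineOf {g h x y : G} (hx : x ∈ lineOf C g h)
    (hy : y ∈ lineOf C g h) : x⁻¹ * y ∈ conjSub C h := by
  rw [lineOf_eq_of_mem hx] at hy
  exact mem_lineOf.1 hy

theorem lineOf_congr {g h k : G} (hhk : conjSub C h = conjSub C k) :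
    lineOf C g h = lineOf C g k := by
  simp only [lineOf, hhk]

end Lines

theorem stmt_8_general {G : Type*} [Group G] (C : Subgroup G)
    (hpart : ∀ x : G, x ≠ 1 → ∃! D : Subgroup G, (∃ g : G, D = conjSub C g) ∧ x ∈ D) :
    ∀ x y : G, x ≠ y →
      ∃! L : Set G, (∃ g h : G, L = lineOf C g h) ∧ x ∈ L ∧ y ∈ L := by
  intro x y hxy
  obtain ⟨_, ⟨⟨k, rfl⟩, hk⟩, huniq⟩ := hpart (x⁻¹ * y) (by rwa [ne_eq, inv_mul_eq_one])
  refine ⟨lineOf C x k, ⟨⟨x, k, rfl⟩, self_mem_lineOf x k, mem_lineOf.2 hk⟩, ?_⟩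
  rintro _ ⟨⟨g, h, rfl⟩, hx, hy⟩
  have hhk : conjSub C h = conjSub C k :=
    huniq _ ⟨⟨h, rfl⟩, inv_mul_mem_conjSub_of_mem_lineOf hx hy⟩
  rw [lineOf_eq_of_mem hx, lineOf_congr hhk]

/-- If the conjugates of the nontrivial proper subgroup `C` partition `G ∖ {1}`
(every nonidentity element lies in exactly one conjugate of `C`), then any two distinct
elements of `G` lie on a unique "line", i.e. a left coset of a conjugate of `C`. -/
theorem stmt_8 {G : Type*} [Group G] (C : Subgroup G) (hbot : C ≠ ⊥) (htop : C ≠ ⊤)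
    (hpart : ∀ x : G, x ≠ 1 → ∃! D : Subgroup G, (∃ g : G, D = conjSub C g) ∧ x ∈ D) :
    ∀ x y : G, x ≠ y →
      ∃! L : Set G, (∃ g h : G, L = lineOf C g h) ∧ x ∈ L ∧ y ∈ L :=
  stmt_8_general C hpart
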